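/- arXiv:1307.2347 — 4 statements merged into one kernel-verified Lean document; each statement's English description precedes it below -/
import Mathlib

section
/- The number a(n,k) of labeled directed acyclic graphs on vertex set {1,...,n} having exactly k source vertices (vertices of in-degree 0) satisfies, for 1 ≤ k < n, the recurrence a(n,k) = C(n,k) · Σ_{s=1}^{n-k} (2^k - 1)^s · 2^{k(n-k-s)} · a(n-k, s), with a(n,n) = 1 for all n ≥ 1. -/
/-- A relation is acyclic if there is no directed cycle. -/
def IsAcyclicRel {V : Type*} (r : V → V → Prop) : Prop :=
  ∀ v, ¬ Relation.TransGen r v v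

/-- The number of labeled DAGs on vertex set `Fin n` having exactly `k` sources
(vertices with no in-coming arc). -/
noncomputable def dagCount (n k : ℕ) : ℕ :=
  Nat.card {r : Fin n → Fin n → Prop //
    IsAcyclicRel r ∧ Nat.card {v : Fin n // ∀ u, ¬ r u v} = k}

namespace Robinson

open Relation

variable {V : Type*}

/-- `v` is a source of `r`. -/
def Src (r : V → V → Prop) (v : V) : Prop := ∀ u, ¬ r u v

/-- DAGs on `α` with exactly `s` sources. -/
def relD (α : Type*) (s : ℕ) := {r : α → α → Prop // IsAcyclicRel r ∧ Nat.card {v // Src r v} = s}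

lemma dagCount_eq (m s : ℕ) : dagCount m s = Nat.card (relD (Fin m) s) := rfl

section transport

variable {α β : Type*} (e : α ≃ β)

def comap (r : β → β → Prop) : α → α → Prop := fun a b => r (e a) (e b)

lemma comap_acyclic {r : β → β → Prop} (h : IsAcyclicRel r) : IsAcyclicRel (comap e r) :=
  fun a ha => h (e a) (Relation.TransGen.lift e (fun _ _ hab => hab) _ _ ha)

lemma src_comap (r : β → β → Prop) (a : α) : Src (comap e r) a ↔ Src r (e a) := by
  constructor
  · intro H u
    simpa [comap] using H (e.symm u)
  · intro H u
    exact H (e u)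

def relDEquiv (s : ℕ) : relD α s ≃ relD β s where
  toFun r := ⟨comap e.symm r.1, comap_acyclic e.symm r.2.1, by
    exact (Nat.card_congr (e.symm.subtypeEquiv (fun b => src_comap e.symm r.1 b))).trans r.2.2⟩
  invFun r := ⟨comap e r.1, comap_acyclic e r.2.1, by
    exact (Nat.card_congr (e.subtypeEquiv (fun a => src_comap e r.1 a))).trans r.2.2⟩
  left_inv r := Subtype.ext (by funext a b; simp [comap])
  right_inv r := Subtype.ext (by funext a b; simp [comap])

end transport

/-- Every nonempty finite DAG has a source. -/
lemma exists_src {α : Type*} [Finite α] [Nonempty α] {r : α → α → Prop}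
    (hr : IsAcyclicRel r) : ∃ v, Src r v := by
  have htrans : IsTrans α (Relation.TransGen r) := ⟨fun _ _ _ h1 h2 => h1.trans h2⟩
  have hirr : IsIrrefl α (Relation.TransGen r) := ⟨hr⟩
  have hwf := Finite.wellFounded_of_trans_of_irrefl (Relation.TransGen r)
  obtain ⟨v, -, hv⟩ := hwf.has_min Set.univ (Set.univ_nonempty)
  exact ⟨v, fun u hu => hv u trivial (Relation.TransGen.single hu)⟩

/-- Cardinality of subtype as a filter card. -/
lemma natCard_subtype {α : Type*} [Fintype α] (p : α → Prop) [DecidablePred p] :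
    Nat.card {a // p a} = (Finset.univ.filter p).card := by
  rw [Nat.card_eq_fintype_card]
  simp [Fintype.card_subtype]

/-- Counting functions into subsets, nonempty on a prescribed set. -/
lemma card_fun_nonempty (α X : Type*) [Fintype α] [Fintype X] (p : α → Prop) :
    Nat.card {h : α → Set X // ∀ a, p a → (h a).Nonempty}
      = (2 ^ Fintype.card X - 1) ^ (Nat.card {a // p a})
        * 2 ^ (Fintype.card X * (Fintype.card α - Nat.card {a // p a})) := by
  classical
  have hset : Nat.card (Set X) = 2 ^ Fintype.card X := by
    have : Nat.card (Set X) = Nat.card (X → Prop) := Nat.card_congr (Equiv.refl _)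
    rw [this, Nat.card_eq_fintype_card, Fintype.card_fun, Fintype.card_prop]
  have hne : Nat.card {A : Set X // A.Nonempty} = 2 ^ Fintype.card X - 1 := by
    have h1 : Nat.card {A : Set X // A.Nonempty} = Nat.card {A : Set X // ¬ (A = ∅)} :=
      Nat.card_congr (Equiv.subtypeEquivRight (fun A => Set.nonempty_iff_ne_empty))
    rw [h1, Nat.card_eq_fintype_card, Fintype.card_subtype_compl,
      Fintype.card_subtype_eq (∅ : Set X), ← Nat.card_eq_fintype_card, hset]
  have hinner : ∀ a, Nat.card {A : Set X // p a → A.Nonempty}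
      = if p a then 2 ^ Fintype.card X - 1 else 2 ^ Fintype.card X := by
    intro a
    by_cases hpa : p a
    · rw [if_pos hpa, Nat.card_congr (Equiv.subtypeEquivRight (q := fun A : Set X => A.Nonempty) (fun A => by simp [hpa]))]
      exact hne
    · rw [if_neg hpa, Nat.card_congr (Equiv.subtypeUnivEquiv (fun A hp => absurd hp hpa))]
      exact hset
  rw [Nat.card_congr (Equiv.subtypePiEquivPi (p := fun a A => p a → (A : Set X).Nonempty)),
    Nat.card_pi]
  rw [Finset.prod_congr rfl (fun a _ => hinner a), Finset.prod_ite, Finset.prod_const,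
    Finset.prod_const]
  have h1 : (Finset.univ.filter p).card = Nat.card {a // p a} := (natCard_subtype p).symm
  have h2 : (Finset.univ.filter (fun a => ¬ p a)).card
      = Fintype.card α - Nat.card {a // p a} := by
    have h3 := Finset.card_filter_add_card_filter_not (s := Finset.univ) (p := p)
    rw [Finset.card_univ, h1] at h3
    have h4 : Nat.card {a // p a} ≤ Fintype.card α := by
      rw [Nat.card_eq_fintype_card]; exact Fintype.card_subtype_le p
    omega
  rw [h1, h2, pow_mul]



def prodSubtypeEquivSigma {A B : Type*} (P : A → Prop) (Q : A → B → Prop) :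
    {p : A × B // P p.1 ∧ Q p.1 p.2} ≃ Σ a : {a // P a}, {b // Q a.1 b} where
  toFun x := ⟨⟨x.1.1, x.2.1⟩, x.1.2, x.2.2⟩
  invFun x := ⟨(x.1.1, x.2.1), x.1.2, x.2.2⟩
  left_inv := by rintro ⟨⟨a, b⟩, h1, h2⟩; rfl
  right_inv := by rintro ⟨⟨a, h1⟩, ⟨b, h2⟩⟩; rfl

section glue

variable (S : Finset V)

/-- Reassemble a DAG from the induced graph on the complement of `S` and arcs out of `S`. -/
def glue (r' : {v : V // v ∉ S} → {v : V // v ∉ S} → Prop)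
    (h : {v : V // v ∉ S} → Set {v : V // v ∈ S}) : V → V → Prop :=
  fun u v => ∃ hv : v ∉ S, (∃ hu : u ∈ S, (⟨u, hu⟩ : {v : V // v ∈ S}) ∈ h ⟨v, hv⟩) ∨
    (∃ hu : u ∉ S, r' ⟨u, hu⟩ ⟨v, hv⟩)

variable {S} {r' : {v : V // v ∉ S} → {v : V // v ∉ S} → Prop}
  {h : {v : V // v ∉ S} → Set {v : V // v ∈ S}}

lemma transGen_glue {a b : V} (hab : TransGen (glue S r' h) a b) (ha : a ∉ S) :
    ∃ hb : b ∉ S, TransGen r' ⟨a, ha⟩ ⟨b, hb⟩ := by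
  induction hab with
  | single hstep =>
    obtain ⟨hb, hcase⟩ := hstep
    refine ⟨hb, ?_⟩
    rcases hcase with ⟨hu, _⟩ | ⟨hu, hrr⟩
    · exact absurd hu ha
    · exact TransGen.single hrr
  | tail hab hbc ih =>
    obtain ⟨hb, htg⟩ := ih
    obtain ⟨hc, hcase⟩ := hbc
    rcases hcase with ⟨hu, _⟩ | ⟨hu, hrr⟩
    · exact absurd hu hb
    · exact ⟨hc, htg.tail hrr⟩

lemma glue_acyclic (hr' : IsAcyclicRel r') : IsAcyclicRel (glue S r' h) := by
  intro v hv
  have hvS : v ∉ S := by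
    obtain ⟨b, -, hbv⟩ := (Relation.TransGen.tail'_iff).mp hv
    exact hbv.1
  obtain ⟨hb, htg⟩ := transGen_glue hv hvS
  exact hr' _ htg

lemma src_glue_iff (hne : ∀ w, Src r' w → (h w).Nonempty) (v : V) :
    Src (glue S r' h) v ↔ v ∈ S := by
  constructor
  · intro hsrc
    by_contra hvS
    by_cases hs : Src r' ⟨v, hvS⟩
    · obtain ⟨t, ht⟩ := hne _ hs
      exact hsrc t.1 ⟨hvS, Or.inl ⟨t.2, ht⟩⟩
    · simp only [Src, not_forall, not_not] at hs
      obtain ⟨u, hu⟩ := hs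
      exact hsrc u.1 ⟨hvS, Or.inr ⟨u.2, hu⟩⟩
  · intro hv u hglue
    obtain ⟨hv', -⟩ := hglue
    exact hv' hv

/-- The central equivalence: DAGs with source set exactly `S` correspond to pairs of a DAG
on the complement of `S` together with arc sets from `S` hitting every source of it. -/
def e2 : {r : V → V → Prop // IsAcyclicRel r ∧ ∀ v, Src r v ↔ v ∈ S} ≃
    {p : ({v : V // v ∉ S} → {v : V // v ∉ S} → Prop) ×
         ({v : V // v ∉ S} → Set {v : V // v ∈ S}) //
      IsAcyclicRel p.1 ∧ ∀ w, Src p.1 w → (p.2 w).Nonempty} where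
  toFun x := ⟨(fun a b => x.1 a.1 b.1, fun w => {t | x.1 t.1 w.1}), by
    constructor
    · exact fun w hw => x.2.1 w.1 (Relation.TransGen.lift Subtype.val (fun _ _ hab => hab) _ _ hw)
    · intro w hw
      have h1 : ¬ Src x.1 w.1 := fun hS => w.2 ((x.2.2 w.1).mp hS)
      simp only [Src, not_forall, not_not] at h1
      obtain ⟨u, hu⟩ := h1
      by_cases huS : u ∈ S
      · exact ⟨⟨u, huS⟩, hu⟩
      · exact absurd hu (hw ⟨u, huS⟩)⟩
  invFun y := ⟨glue S y.1.1 y.1.2, glue_acyclic y.2.1, src_glue_iff y.2.2⟩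
  left_inv := by
    rintro ⟨r, hr, hsrc⟩
    apply Subtype.ext
    funext u v
    apply propext
    constructor
    · rintro ⟨hv, ⟨hu, hruv⟩ | ⟨hu, hruv⟩⟩ <;> exact hruv
    · intro hruv
      have hv : v ∉ S := fun hvS => ((hsrc v).mpr hvS) u hruv
      by_cases hu : u ∈ S
      · exact ⟨hv, Or.inl ⟨hu, hruv⟩⟩
      · exact ⟨hv, Or.inr ⟨hu, hruv⟩⟩
  right_inv := by
    rintro ⟨⟨r', h⟩, hr', hne⟩
    apply Subtype.ext
    refine Prod.ext ?_ ?_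
    · funext a b
      apply propext
      constructor
      · rintro ⟨hv, ⟨hu, _⟩ | ⟨hu, hrr⟩⟩
        · exact absurd hu a.2
        · exact hrr
      · intro hrr
        exact ⟨b.2, Or.inr ⟨a.2, hrr⟩⟩
    · funext w
      ext t
      constructor
      · rintro ⟨hv, ⟨hu, hmem⟩ | ⟨hu, _⟩⟩
        · exact hmem
        · exact absurd t.2 hu
      · intro hmem
        exact ⟨w.2, Or.inl ⟨t.2, hmem⟩⟩

end glue

section e1

variable [Fintype V]

noncomputable def srcFinset (r : V → V → Prop) : Finset V :=
  @Finset.filter _ (Src r) (Classical.decPred _) Finset.univ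

lemma mem_srcFinset {r : V → V → Prop} {v : V} : v ∈ srcFinset r ↔ Src r v := by
  simp [srcFinset]

lemma card_srcFinset (r : V → V → Prop) :
    (srcFinset r).card = Nat.card {v // Src r v} := by
  rw [@natCard_subtype _ _ (Src r) (Classical.decPred _)]
  rfl

noncomputable def e1 (k : ℕ) :
    {r : V → V → Prop // IsAcyclicRel r ∧ Nat.card {v // Src r v} = k} ≃
    Σ S : {A : Finset V // A.card = k},
      {r : V → V → Prop // IsAcyclicRel r ∧ ∀ v, Src r v ↔ v ∈ S.1} where
  toFun x := ⟨⟨srcFinset x.1, by rw [card_srcFinset]; exact x.2.2⟩,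
    ⟨x.1, x.2.1, fun v => mem_srcFinset.symm⟩⟩
  invFun y := ⟨y.2.1, y.2.2.1, by
    have hA : srcFinset y.2.1 = y.1.1 := Finset.ext fun v => mem_srcFinset.trans (y.2.2.2 v)
    rw [← card_srcFinset, hA]
    exact y.1.2⟩
  left_inv x := Subtype.ext rfl
  right_inv := by
    rintro ⟨⟨S, hS⟩, ⟨r, hr, hsrc⟩⟩
    have hA : srcFinset r = S := Finset.ext fun v => mem_srcFinset.trans (hsrc v)
    refine Sigma.ext (Subtype.ext hA) ?_
    refine (Subtype.heq_iff_coe_eq ?_).mpr rfl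
    intro x
    dsimp only
    rw [hA]

end e1



lemma card_fiber [Fintype V] [DecidableEq V] (n k : ℕ) (hV : Fintype.card V = n)
    (hk : k < n) (S : Finset V) (hS : S.card = k) :
    Nat.card {r : V → V → Prop // IsAcyclicRel r ∧ ∀ v, Src r v ↔ v ∈ S}
      = ∑ s ∈ Finset.Icc 1 (n - k),
          (2 ^ k - 1) ^ s * 2 ^ (k * (n - k - s)) * dagCount (n - k) s := by
  classical
  rw [Nat.card_congr ((e2 (S := S)).trans (prodSubtypeEquivSigma
    (A := {v : V // v ∉ S} → {v : V // v ∉ S} → Prop)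
    (B := {v : V // v ∉ S} → Set {v : V // v ∈ S})
    IsAcyclicRel (fun r'' hh => ∀ w, Src r'' w → (hh w).Nonempty)))]
  have hW : Fintype.card {v : V // v ∉ S} = n - k := by
    rw [Fintype.card_subtype_compl, hV]
    congr 1
    rw [← hS]
    exact Fintype.card_coe S
  have hT : Fintype.card {v : V // v ∈ S} = k := by
    rw [← hS]; exact Fintype.card_coe S
  have hWne : Nonempty {v : V // v ∉ S} := by
    rw [← Fintype.card_pos_iff, hW]; omega
  rw [Nat.card_eq_fintype_card, Fintype.card_sigma]
  set A := {r'' : {v : V // v ∉ S} → {v : V // v ∉ S} → Prop // IsAcyclicRel r''} with hAdef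
  set c : A → ℕ := fun a => Nat.card {w // Src a.1 w} with hc
  have hterm : ∀ a : A,
      Fintype.card {b : {v : V // v ∉ S} → Set {v : V // v ∈ S} // ∀ w, Src a.1 w → (b w).Nonempty}
        = (2 ^ k - 1) ^ (c a) * 2 ^ (k * (n - k - c a)) := by
    intro a
    rw [← Nat.card_eq_fintype_card, card_fun_nonempty, hW, hT]
  have hmaps : ∀ a : A, a ∈ Finset.univ → c a ∈ Finset.Icc 1 (n - k) := by
    intro a _
    rw [Finset.mem_Icc]
    constructor
    · have : Nonempty {w // Src a.1 w} := by
        obtain ⟨w, hw⟩ := exists_src a.2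
        exact ⟨⟨w, hw⟩⟩
      exact Nat.one_le_iff_ne_zero.mpr (Nat.card_ne_zero.mpr ⟨this, inferInstance⟩)
    · rw [hc]
      simp only []
      rw [Nat.card_eq_fintype_card, ← hW]
      exact Fintype.card_subtype_le _
  have hfib : ∀ s, (Finset.univ.filter (fun a : A => c a = s)).card = dagCount (n - k) s := by
    intro s
    rw [← natCard_subtype]
    rw [Nat.card_congr (Equiv.subtypeSubtypeEquivSubtypeInter IsAcyclicRel
      (fun r'' => Nat.card {w // Src r'' w} = s))]
    have : Nat.card (relD {v : V // v ∉ S} s) = Nat.card (relD (Fin (n - k)) s) :=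
      Nat.card_congr (relDEquiv (Fintype.equivFinOfCardEq hW) s)
    rw [dagCount_eq]
    exact this
  calc ∑ a : A, Fintype.card {b : {v : V // v ∉ S} → Set {v : V // v ∈ S} // ∀ w, Src a.1 w → (b w).Nonempty}
      = ∑ a : A, (2 ^ k - 1) ^ (c a) * 2 ^ (k * (n - k - c a)) :=
        Finset.sum_congr rfl (fun a _ => hterm a)
    _ = ∑ s ∈ Finset.Icc 1 (n - k), ∑ a ∈ Finset.univ.filter (fun a : A => c a = s),
          (2 ^ k - 1) ^ (c a) * 2 ^ (k * (n - k - c a)) :=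
        (Finset.sum_fiberwise_of_maps_to hmaps _).symm
    _ = ∑ s ∈ Finset.Icc 1 (n - k),
          (2 ^ k - 1) ^ s * 2 ^ (k * (n - k - s)) * dagCount (n - k) s := by
        refine Finset.sum_congr rfl (fun s _ => ?_)
        rw [Finset.sum_congr rfl (fun a ha => by
          rw [(Finset.mem_filter.mp ha).2] :
            ∀ a ∈ Finset.univ.filter (fun a : A => c a = s), _ = (2 ^ k - 1) ^ s * 2 ^ (k * (n - k - s)))]
        rw [Finset.sum_const, hfib, smul_eq_mul, mul_comm]

lemma all_of_card {m : ℕ} {p : Fin m → Prop} (h : Nat.card {v // p v} = m) : ∀ v, p v := by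
  have h1 : {v | p v}.ncard = m := by
    rw [← Nat.card_coe_set_eq]
    exact h
  have h2 : {v | p v} = Set.univ := by
    apply Set.eq_of_subset_of_ncard_le (Set.subset_univ _)
    rw [h1, Set.ncard_univ, Nat.card_eq_fintype_card, Fintype.card_fin]
  intro v
  have := Set.eq_univ_iff_forall.mp h2 v
  exact this

lemma dag_mm (m : ℕ) : dagCount m m = 1 := by
  rw [dagCount]
  rw [Nat.card_eq_one_iff_unique]
  constructor
  · constructor
    rintro ⟨r, hr, hcard⟩ ⟨r2, hr2, hcard2⟩
    have h1 := all_of_card hcard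
    have h2 := all_of_card hcard2
    apply Subtype.ext
    funext u v
    apply propext
    constructor
    · intro h; exact absurd h (h1 v u)
    · intro h; exact absurd h (h2 v u)
  · refine ⟨⟨fun _ _ => False, ?_, ?_⟩⟩
    · intro v hv
      obtain ⟨b, -, hb⟩ := Relation.TransGen.tail'_iff.mp hv
      exact hb
    · rw [Nat.card_congr (Equiv.subtypeUnivEquiv (fun v u => not_false))]
      rw [Nat.card_eq_fintype_card, Fintype.card_fin]

end Robinson

/-- Robinson's recurrence for counting labeled DAGs by number of sources. -/
theorem stmt_5 (n k : ℕ) (h1 : 1 ≤ k) (h2 : k < n) :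
    (∀ m, 1 ≤ m → dagCount m m = 1) ∧
    dagCount n k =
      n.choose k *
        ∑ s ∈ Finset.Icc 1 (n - k),
          (2 ^ k - 1) ^ s * 2 ^ (k * (n - k - s)) * dagCount (n - k) s := by
  classical
  refine ⟨fun m _ => Robinson.dag_mm m, ?_⟩
  have e := (Robinson.e1 (V := Fin n) k)
  have hcard : dagCount n k = Nat.card
      (Σ S : {A : Finset (Fin n) // A.card = k},
        {r : Fin n → Fin n → Prop // IsAcyclicRel r ∧ ∀ v, Robinson.Src r v ↔ v ∈ S.1}) :=
    Nat.card_congr e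
  rw [hcard, Nat.card_eq_fintype_card, Fintype.card_sigma]
  have hfib : ∀ S : {A : Finset (Fin n) // A.card = k},
      Fintype.card {r : Fin n → Fin n → Prop // IsAcyclicRel r ∧ ∀ v, Robinson.Src r v ↔ v ∈ S.1}
        = ∑ s ∈ Finset.Icc 1 (n - k),
            (2 ^ k - 1) ^ s * 2 ^ (k * (n - k - s)) * dagCount (n - k) s := by
    intro S
    rw [← Nat.card_eq_fintype_card]
    exact Robinson.card_fiber n k (Fintype.card_fin n) h2 S.1 S.2
  rw [Finset.sum_congr rfl (fun S _ => hfib S), Finset.sum_const, Finset.card_univ,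
    Fintype.card_finset_len, Fintype.card_fin, smul_eq_mul]
end

section
/- Let 0 < ε ≤ 1, n ≥ 1 and define δ = ε/n. Suppose the approximate counts s̃(i,c) satisfy s̃(0,c) = 1 for c ≥ 0, s̃(i,c) = 0 for c < 0, and s̃(i,c) = s̃(i-1,c) ⊕ s̃(i-1,c-wᵢ) where ⊕ is any operation with (1-δ)(a+b) ≤ a ⊕ b ≤ a+b for all nonnegative reals a, b. Then for every 0 ≤ i ≤ n and every c, (1 - ε/n)^i · s(i,c) ≤ s̃(i,c) ≤ s(i,c), and in particular s̃(n,C) ≥ (1-ε)·s(n,C). -/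
/-- `knapCount w i c` is the number of subsets `S ⊆ {1,…,i}` with `∑_{j∈S} w j ≤ c`. -/
def knapCount (w : ℕ → ℕ) (i : ℕ) (c : ℤ) : ℕ :=
  ((Finset.Icc 1 i).powerset.filter (fun S => (∑ j ∈ S, (w j : ℤ)) ≤ c)).card

lemma knap_neg (w : ℕ → ℕ) (i : ℕ) (c : ℤ) (hc : c < 0) : knapCount w i c = 0 := by
  unfold knapCount
  rw [Finset.card_eq_zero, Finset.filter_eq_empty_iff]
  intro S _
  have : (0:ℤ) ≤ ∑ j ∈ S, (w j : ℤ) := Finset.sum_nonneg (fun j _ => by positivity)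
  omega

lemma knap_zero (w : ℕ → ℕ) (c : ℤ) (hc : 0 ≤ c) : knapCount w 0 c = 1 := by
  unfold knapCount
  rw [show Finset.Icc 1 0 = ∅ by simp, Finset.powerset_empty, Finset.filter_singleton]
  simp [hc]

lemma knap_rec (w : ℕ → ℕ) (i : ℕ) (c : ℤ) :
    knapCount w (i+1) c = knapCount w i c + knapCount w i (c - w (i+1)) := by
  have hmem : (i+1) ∉ Finset.Icc 1 i := by simp
  unfold knapCount
  rw [show Finset.Icc 1 (i+1) = insert (i+1) (Finset.Icc 1 i) by
    ext x; simp [Finset.mem_Icc]; omega]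
  rw [Finset.card_filter, Finset.card_filter, Finset.card_filter,
    Finset.sum_powerset_insert hmem]
  congr 1
  apply Finset.sum_congr rfl
  intro S hS
  have hS' : (i+1) ∉ S := fun h => hmem (Finset.mem_powerset.mp hS h)
  rw [Finset.sum_insert hS']
  have : ((w (i+1) : ℤ) + ∑ j ∈ S, (w j : ℤ) ≤ c) ↔ (∑ j ∈ S, (w j : ℤ) ≤ c - w (i+1)) := by omega
  simp [this]

/-- If the approximate counts are computed by the floating-point recurrence with
per-operation relative error `1 - ε/n`, then `(1-ε/n)^i·s(i,c) ≤ s̃(i,c) ≤ s(i,c)`,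
and in particular `s̃(n,C) ≥ (1-ε)·s(n,C)`. -/
theorem stmt_11 (n : ℕ) (hn : 1 ≤ n) (ε : ℝ) (hε : 0 < ε) (hε1 : ε ≤ 1)
    (w : ℕ → ℕ) (C : ℤ) (hC : 0 ≤ C)
    (oplus : ℝ → ℝ → ℝ)
    (hop : ∀ a b : ℝ, 0 ≤ a → 0 ≤ b →
      (1 - ε / n) * (a + b) ≤ oplus a b ∧ oplus a b ≤ a + b)
    (st : ℕ → ℤ → ℝ)
    (h0 : ∀ c : ℤ, 0 ≤ c → st 0 c = 1)
    (hneg : ∀ i : ℕ, ∀ c : ℤ, c < 0 → st i c = 0)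
    (hrec : ∀ i : ℕ, 1 ≤ i → i ≤ n → ∀ c : ℤ, 0 ≤ c →
      st i c = oplus (st (i - 1) c) (st (i - 1) (c - w i))) :
    (∀ i : ℕ, i ≤ n → ∀ c : ℤ,
      (1 - ε / n) ^ i * (knapCount w i c : ℝ) ≤ st i c ∧ st i c ≤ (knapCount w i c : ℝ)) ∧
    (1 - ε) * (knapCount w n C : ℝ) ≤ st n C := by
  have hn' : (1:ℝ) ≤ n := by exact_mod_cast hn
  have hδ : 0 ≤ 1 - ε / n := by
    have : ε / n ≤ 1 := by
      rw [div_le_one (by linarith)]; linarith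
    linarith
  have key : ∀ i : ℕ, i ≤ n → ∀ c : ℤ,
      (1 - ε / n) ^ i * (knapCount w i c : ℝ) ≤ st i c ∧ st i c ≤ (knapCount w i c : ℝ) := by
    intro i
    induction i with
    | zero =>
      intro _ c
      rcases lt_or_ge c 0 with hc | hc
      · simp [hneg 0 c hc, knap_neg w 0 c hc]
      · simp [h0 c hc, knap_zero w c hc]
    | succ i ih =>
      intro hi c
      have hi' : i ≤ n := by omega
      rcases lt_or_ge c 0 with hc | hc
      · simp [hneg (i+1) c hc, knap_neg w (i+1) c hc]
      · have hrw := hrec (i+1) (by omega) hi c hc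
        simp only [Nat.add_sub_cancel] at hrw
        obtain ⟨l1, u1⟩ := ih hi' c
        obtain ⟨l2, u2⟩ := ih hi' (c - w (i+1))
        have nn1 : (0:ℝ) ≤ st i c := le_trans (by positivity) l1
        have nn2 : (0:ℝ) ≤ st i (c - w (i+1)) := le_trans (by positivity) l2
        obtain ⟨ol, ou⟩ := hop _ _ nn1 nn2
        rw [knap_rec w i c, hrw]
        push_cast
        constructor
        · calc (1 - ε / n) ^ (i+1) * ((knapCount w i c : ℝ) + knapCount w i (c - w (i+1)))
              = (1 - ε / n) * ((1 - ε / n) ^ i * (knapCount w i c : ℝ)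
                + (1 - ε / n) ^ i * (knapCount w i (c - w (i+1)) : ℝ)) := by ring
            _ ≤ (1 - ε / n) * (st i c + st i (c - w (i+1))) := by
                apply mul_le_mul_of_nonneg_left (by linarith) hδ
            _ ≤ _ := ol
        · exact le_trans ou (by linarith)
  refine ⟨key, ?_⟩
  have hpow : (1 - ε) ≤ (1 - ε / n) ^ n := by
    have := one_add_mul_le_pow (a := -(ε / n)) (by linarith [div_nonneg hε.le (le_trans zero_le_one hn')]) n
    have hne : (n:ℝ) ≠ 0 := by linarith
    have : 1 + (n:ℝ) * (-(ε / n)) = 1 - ε := by field_simp; ring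
    calc (1:ℝ) - ε = 1 + (n:ℝ) * (-(ε / n)) := this.symm
      _ ≤ (1 + -(ε / n)) ^ n := one_add_mul_le_pow (by linarith [div_nonneg hε.le (le_trans zero_le_one hn')]) n
      _ = (1 - ε / n) ^ n := by ring_nf
  obtain ⟨l, _⟩ := key n le_rfl C
  calc (1 - ε) * (knapCount w n C : ℝ) ≤ (1 - ε / n) ^ n * (knapCount w n C : ℝ) := by
        apply mul_le_mul_of_nonneg_right hpow (by positivity)
    _ ≤ st n C := l
end

section
/- Let list(i-1) be a finite set of pairs (c', t') strictly increasing in both components, and define s̃(i-1, c) := max{ t' : (c', t') ∈ list(i-1), c' ≤ c } (with max ∅ = 0). Let list'(i) contain, for each capacity c in list(i-1), the pairs (c, s̃(i-1,c) ⊕ s̃(i-1,c-w)) and (c+w, s̃(i-1,c+w) ⊕ s̃(i-1,c)), and let list(i) be obtained from the sorted list'(i) by deleting any pair whose predecessor has the same second component. Then for every capacity c, s̃(i,c) defined from list(i) equals s̃(i-1,c) ⊕ s̃(i-1,c-w), provided ⊕ is monotone nondecreasing in both arguments. -/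
open Classical in
/-- `stepFun L c = max { t' : (c',t') ∈ L, c' ≤ c }` (with `max ∅ = 0`). -/
noncomputable def stepFun (L : Finset (ℤ × ℝ)) (c : ℤ) : ℝ :=
  (L.filter (fun p => p.1 ≤ c)).fold max 0 Prod.snd

open Classical in
lemma stepFun_nonneg (L : Finset (ℤ × ℝ)) (c : ℤ) : 0 ≤ stepFun L c := by
  unfold stepFun
  rw [Finset.le_fold_max]
  exact Or.inl le_rfl

open Classical in
lemma le_stepFun {L : Finset (ℤ × ℝ)} {p : ℤ × ℝ} (hp : p ∈ L) {c : ℤ} (h : p.1 ≤ c) :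
    p.2 ≤ stepFun L c := by
  unfold stepFun
  rw [Finset.le_fold_max]
  exact Or.inr ⟨p, Finset.mem_filter.2 ⟨hp, h⟩, le_rfl⟩

open Classical in
lemma stepFun_le {L : Finset (ℤ × ℝ)} {c : ℤ} {b : ℝ} (hb : 0 ≤ b)
    (h : ∀ p ∈ L, p.1 ≤ c → p.2 ≤ b) : stepFun L c ≤ b := by
  unfold stepFun
  rw [Finset.fold_max_le]
  exact ⟨hb, fun p hp => h p (Finset.mem_filter.1 hp).1 (Finset.mem_filter.1 hp).2⟩

open Classical in
lemma stepFun_mono {L : Finset (ℤ × ℝ)} (hpos : ∀ p ∈ L, 0 ≤ p.2) {c c' : ℤ} (h : c ≤ c') :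
    stepFun L c ≤ stepFun L c' :=
  stepFun_le (stepFun_nonneg L c') (fun p hp hpc => le_stepFun hp (hpc.trans h))

open Classical in
lemma stepFun_congr {L : Finset (ℤ × ℝ)} {c c' : ℤ}
    (h : ∀ p ∈ L, (p.1 ≤ c ↔ p.1 ≤ c')) : stepFun L c = stepFun L c' := by
  unfold stepFun
  congr 1
  exact Finset.filter_congr (fun p hp => by simpa using h p hp)

open Classical in
/-- Correctness of the pruned-list dynamic-programming step: if `L'` contains, for
each capacity `c` of `L`, the pairs `(c, s̃(c) ⊕ s̃(c-w))` and `(c+w, s̃(c+w) ⊕ s̃(c))`,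
and `M` keeps from `L'` only the pair of minimal capacity for each value (i.e.
deletes any pair whose predecessor in the sorted order has the same second
component), then the step function of `M` is `c ↦ s̃(c) ⊕ s̃(c-w)`. -/
theorem stmt_13 (oplus : ℝ → ℝ → ℝ)
    (hmono : ∀ a b a' b' : ℝ, a ≤ a' → b ≤ b' → oplus a b ≤ oplus a' b')
    (hzero : oplus 0 0 = 0)
    (w : ℤ) (hw : 0 ≤ w)
    (L : Finset (ℤ × ℝ))
    (hpos : ∀ p ∈ L, 0 ≤ p.2)
    (hincr : ∀ p ∈ L, ∀ q ∈ L, p.1 < q.1 → p.2 < q.2)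
    (L' M : Finset (ℤ × ℝ))
    (hL' : L' = L.image (fun p => (p.1, oplus (stepFun L p.1) (stepFun L (p.1 - w)))) ∪
                L.image (fun p => (p.1 + w, oplus (stepFun L (p.1 + w)) (stepFun L p.1))))
    (hM : M = L'.filter (fun p => ∀ q ∈ L', q.2 = p.2 → p.1 ≤ q.1)) :
    ∀ c : ℤ, stepFun M c = oplus (stepFun L c) (stepFun L (c - w)) := by
  set g : ℤ → ℝ := fun c => oplus (stepFun L c) (stepFun L (c - w)) with hg
  have hgmono : ∀ {c c' : ℤ}, c ≤ c' → g c ≤ g c' := by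
    intro c c' h
    exact hmono _ _ _ _ (stepFun_mono hpos h) (stepFun_mono hpos (by omega))
  have hgnonneg : ∀ c, 0 ≤ g c := by
    intro c
    calc (0:ℝ) = oplus 0 0 := hzero.symm
    _ ≤ g c := hmono _ _ _ _ (stepFun_nonneg L c) (stepFun_nonneg L (c - w))
  -- every pair of L' lies on the graph of g
  have hgraph : ∀ q ∈ L', q.2 = g q.1 := by
    intro q hq
    rw [hL'] at hq
    rcases Finset.mem_union.1 hq with h | h <;>
    · obtain ⟨p, hp, rfl⟩ := Finset.mem_image.1 h
      simp [hg]
  intro c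
  apply le_antisymm
  · -- stepFun M c ≤ g c
    apply stepFun_le (hgnonneg c)
    intro p hp hpc
    have hp' : p ∈ L' := (Finset.mem_filter.1 (hM ▸ hp)).1
    rw [hgraph p hp']
    exact hgmono hpc
  · -- g c ≤ stepFun M c
    by_cases hex : ∃ p ∈ L, p.1 ≤ c
    · obtain ⟨p0, hp0, hp0c⟩ := hex
      -- capacities of L' that are ≤ c
      have hScand : (p0.1, oplus (stepFun L p0.1) (stepFun L (p0.1 - w))) ∈ L' := by
        rw [hL']
        exact Finset.mem_union_left _ (Finset.mem_image.2 ⟨p0, hp0, rfl⟩)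
      set S := L'.filter (fun q => q.1 ≤ c) with hS
      have hSne : S.Nonempty := ⟨_, Finset.mem_filter.2 ⟨hScand, hp0c⟩⟩
      -- maximal capacity in S
      obtain ⟨qs, hqsS, hqsmax⟩ := S.exists_max_image (fun q => q.1) hSne
      have hqsL' : qs ∈ L' := (Finset.mem_filter.1 hqsS).1
      have hqsc : qs.1 ≤ c := (Finset.mem_filter.1 hqsS).2
      set cs := qs.1 with hcs
      -- no capacity of L' in (cs, c]
      have hnogap : ∀ q ∈ L', q.1 ≤ c → q.1 ≤ cs := by
        intro q hq hqc
        exact hqsmax q (Finset.mem_filter.2 ⟨hq, hqc⟩)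
      -- capacities of L include capacities of L and shifted ones
      have hcapL : ∀ p ∈ L, (∃ q ∈ L', q.1 = p.1) ∧ (∃ q ∈ L', q.1 = p.1 + w) := by
        intro p hp
        constructor
        · refine ⟨(p.1, oplus (stepFun L p.1) (stepFun L (p.1 - w))), ?_, rfl⟩
          rw [hL']; exact Finset.mem_union_left _ (Finset.mem_image_of_mem _ hp)
        · refine ⟨(p.1 + w, oplus (stepFun L (p.1 + w)) (stepFun L p.1)), ?_, rfl⟩
          rw [hL']; exact Finset.mem_union_right _ (Finset.mem_image_of_mem _ hp)
      -- g c = g cs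
      have h1 : stepFun L c = stepFun L cs := by
        apply stepFun_congr
        intro p hp
        constructor
        · intro hpc
          obtain ⟨⟨q, hq, hq1⟩, _⟩ := hcapL p hp
          have := hnogap q hq (by omega)
          omega
        · intro h; exact h.trans hqsc
      have h2 : stepFun L (c - w) = stepFun L (cs - w) := by
        apply stepFun_congr
        intro p hp
        constructor
        · intro hpc
          obtain ⟨_, ⟨q, hq, hq1⟩⟩ := hcapL p hp
          have := hnogap q hq (by omega)
          omega
        · intro h; omega
      have hgc : g c = g cs := by simp only [hg, h1, h2]
      -- the minimal-capacity pair with value g cs survives in M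
      set T := L'.filter (fun q => q.2 = qs.2) with hT
      have hTne : T.Nonempty := ⟨qs, Finset.mem_filter.2 ⟨hqsL', rfl⟩⟩
      obtain ⟨qm, hqmT, hqmmin⟩ := T.exists_min_image (fun q => q.1) hTne
      have hqmL' : qm ∈ T := hqmT
      have hqmL'' : qm ∈ L' := (Finset.mem_filter.1 hqmT).1
      have hqmval : qm.2 = qs.2 := (Finset.mem_filter.1 hqmT).2
      have hqmM : qm ∈ M := by
        rw [hM]
        refine Finset.mem_filter.2 ⟨hqmL'', fun r hr hrv => ?_⟩
        exact hqmmin r (Finset.mem_filter.2 ⟨hr, by rw [hrv, hqmval]⟩)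
      have hqmc : qm.1 ≤ c := le_trans (hqmmin qs (Finset.mem_filter.2 ⟨hqsL', rfl⟩)) hqsc
      have : qm.2 = g cs := by rw [hqmval, hgraph qs hqsL']
      calc g c = g cs := hgc
      _ = qm.2 := this.symm
      _ ≤ stepFun M c := le_stepFun hqmM hqmc
    · -- no element of L has capacity ≤ c : g c = 0
      push_neg at hex
      have h1 : stepFun L c = 0 := by
        apply le_antisymm _ (stepFun_nonneg L c)
        apply stepFun_le le_rfl
        intro p hp hpc
        exact absurd hpc (not_le.2 (hex p hp))
      have h2 : stepFun L (c - w) = 0 := by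
        apply le_antisymm _ (stepFun_nonneg L (c - w))
        apply stepFun_le le_rfl
        intro p hp hpc
        have := hex p hp; omega
      simp only [h1, h2, hzero]
      exact stepFun_nonneg M c
end

section
/- In the DAG setting with all in-degrees at most 2, if s̃(i,c) is computed by the approximate recurrence s̃(i,c) = s̃(i₁,c-w_{i₁}) ⊕ s̃(i₂,c-w_{i₂}) (or s̃(i,c) = s̃(i₁,c-w_{i₁}) for in-degree 1), where ⊕ satisfies (1-δ)(a+b) ≤ a ⊕ b ≤ a+b, then (1-δ)^(ℓ(i)) · s(i,c) ≤ s̃(i,c) ≤ s(i,c), where ℓ(i) is the length (number of arcs) of the longest directed path from s to vᵢ. -/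
/-- Total weight of a vertex list, summing arc weights over consecutive pairs. -/
def pathWeight {N : ℕ} (w : Fin N → Fin N → ℤ) (l : List (Fin N)) : ℤ :=
  ((l.zip l.tail).map (fun p => w p.1 p.2)).sum

/-- `pathCount adj w s i c` is the number of directed paths from `s` to `i`
whose total weight is at most `c`. -/
noncomputable def pathCount {N : ℕ} (adj : Fin N → Fin N → Prop)
    (w : Fin N → Fin N → ℤ) (s i : Fin N) (c : ℤ) : ℕ :=
  Nat.card {l : List (Fin N) //
    l.Chain' adj ∧ l.head? = some s ∧ l.getLast? = some i ∧ pathWeight w l ≤ c}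

/-- `longestLen adj s i` is the number of arcs of a longest directed path from `s` to `i`. -/
noncomputable def longestLen {N : ℕ} (adj : Fin N → Fin N → Prop) (s i : Fin N) : ℕ :=
  sSup {k : ℕ | ∃ l : List (Fin N),
    l.Chain' adj ∧ l.head? = some s ∧ l.getLast? = some i ∧ l.length = k + 1}

section Helpers

variable {N : ℕ} (adj : Fin N → Fin N → Prop) (w : Fin N → Fin N → ℤ)

lemma pathWeight_cons_cons (x y : Fin N) (l : List (Fin N)) :
    pathWeight w (x :: y :: l) = w x y + pathWeight w (y :: l) := by
  simp [pathWeight]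

lemma pathWeight_nonneg (hw : ∀ u v, 0 ≤ w u v) : ∀ l, 0 ≤ pathWeight w l
  | [] => by simp [pathWeight]
  | [_] => by simp [pathWeight]
  | x :: y :: l => by
    rw [pathWeight_cons_cons]
    exact add_nonneg (hw x y) (pathWeight_nonneg hw (y :: l))

lemma pathWeight_concat (i : Fin N) : ∀ (l : List (Fin N)) (u : Fin N),
    l.getLast? = some u →
    pathWeight w (l ++ [i]) = pathWeight w l + w u i
  | [], u, h => by simp at h
  | [x], u, h => by
    simp only [List.getLast?_singleton, Option.some.injEq] at h
    subst h
    simp [pathWeight]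
  | x :: y :: l, u, h => by
    rw [List.getLast?_cons_cons] at h
    have ih := pathWeight_concat i (y :: l) u h
    simp only [List.cons_append] at ih ⊢
    rw [pathWeight_cons_cons, pathWeight_cons_cons w x y l] at *
    omega

def pset (s i : Fin N) (c : ℤ) : Set (List (Fin N)) :=
  {l | l.Chain' adj ∧ l.head? = some s ∧ l.getLast? = some i ∧ pathWeight w l ≤ c}

lemma pset_neg (hw : ∀ u v, 0 ≤ w u v) {s i : Fin N} {c : ℤ} (hc : c < 0) :
    pset adj w s i c = ∅ := by
  ext l
  simp only [pset, Set.mem_setOf_eq, Set.mem_empty_iff_false, iff_false]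
  rintro ⟨-, -, -, hwt⟩
  exact absurd (le_trans (pathWeight_nonneg w hw l) hwt) (not_le.mpr hc)

lemma pset_finite (htopo : ∀ u v, adj u v → u < v) (s i : Fin N) (c : ℤ) :
    (pset adj w s i c).Finite := by
  rw [← Set.finite_coe_iff]
  refine Finite.of_injective (fun l => (l : List (Fin N)).toFinset) ?_
  rintro ⟨l₁, hl₁⟩ ⟨l₂, hl₂⟩ h
  simp only [Subtype.mk.injEq] at h ⊢
  have p₁ : l₁.Pairwise (· < ·) := List.isChain_iff_pairwise.mp (hl₁.1.imp htopo)
  have p₂ : l₂.Pairwise (· < ·) := List.isChain_iff_pairwise.mp (hl₂.1.imp htopo)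
  have n₁ : l₁.Nodup := p₁.imp ne_of_lt
  have n₂ : l₂.Nodup := p₂.imp ne_of_lt
  exact List.Perm.eq_of_pairwise' (p₁.imp le_of_lt) (p₂.imp le_of_lt)
    (List.perm_of_nodup_nodup_toFinset_eq n₁ n₂ h)

lemma pset_self (htopo : ∀ u v, adj u v → u < v) {s : Fin N} {c : ℤ} (hc : 0 ≤ c) :
    pset adj w s s c = {[s]} := by
  ext l
  simp only [Set.mem_singleton_iff]
  constructor
  · rintro ⟨hch, hhd, hlast, -⟩
    match l with
    | [] => simp at hhd
    | [a] =>
      simp only [List.head?_cons, Option.some.injEq] at hhd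
      rw [hhd]
    | a :: b :: t =>
      simp only [List.head?_cons, Option.some.injEq] at hhd
      rw [List.getLast?_cons_cons] at hlast
      have hmem : s ∈ b :: t := List.mem_of_mem_getLast? (Option.mem_def.mpr hlast)
      have p : (a :: b :: t).Pairwise (· < ·) := List.isChain_iff_pairwise.mp (hch.imp htopo)
      subst hhd
      exact absurd (List.rel_of_pairwise_cons p hmem) (lt_irrefl a)
  · rintro rfl
    exact ⟨List.isChain_singleton s, rfl, rfl, by simp [pathWeight]; exact hc⟩

lemma concat_mem_pset {s u i : Fin N} {c : ℤ} (hadj : adj u i) {l : List (Fin N)}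
    (hl : l ∈ pset adj w s u (c - w u i)) : l ++ [i] ∈ pset adj w s i c := by
  obtain ⟨hch, hhd, hlast, hwt⟩ := hl
  have hne : l ≠ [] := by rintro rfl; simp at hhd
  refine ⟨?_, ?_, ?_, ?_⟩
  · refine List.isChain_append.mpr ⟨hch, List.isChain_singleton i, ?_⟩
    intro x hx y hy
    rw [Option.mem_def, hlast, Option.some.injEq] at hx
    simp only [List.head?_cons, Option.mem_def, Option.some.injEq] at hy
    rw [← hx, ← hy]; exact hadj
  · rw [List.head?_append_of_ne_nil _ hne]; exact hhd
  · exact List.getLast?_concat (l := l)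
  · rw [pathWeight_concat w i l u hlast]; omega

lemma pset_decomp (htopo : ∀ u v, adj u v → u < v) {s i : Fin N} (hsi : s ≠ i) {c : ℤ}
    {l : List (Fin N)} (hl : l ∈ pset adj w s i c) :
    ∃ u l', adj u i ∧ l'.getLast? = some u ∧ l = l' ++ [i] ∧
      l' ∈ pset adj w s u (c - w u i) := by
  obtain ⟨hch, hhd, hlast, hwt⟩ := hl
  rcases List.eq_nil_or_concat l with rfl | ⟨L, a, hla⟩
  · simp at hhd
  · rw [List.concat_eq_append] at hla
    subst hla
    have ha : a = i := by
      rw [List.getLast?_concat] at hlast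
      exact Option.some_injective _ hlast
    subst ha
    have hL : L ≠ [] := by
      rintro rfl
      simp only [List.nil_append, List.head?_cons, Option.some.injEq] at hhd
      exact hsi hhd.symm
    rcases List.eq_nil_or_concat L with rfl | ⟨L', u, hLu⟩
    · exact absurd rfl hL
    rw [List.concat_eq_append] at hLu
    subst hLu
    have hu : (L' ++ [u]).getLast? = some u := List.getLast?_concat (l := L')
    obtain ⟨hch', -, hrel⟩ := List.isChain_append.mp hch
    have hadj : adj u a := hrel u hu a rfl
    refine ⟨u, L' ++ [u], hadj, hu, rfl, hch', ?_, hu, ?_⟩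
    · rw [List.head?_append_of_ne_nil _ hL] at hhd; exact hhd
    · rw [pathWeight_concat w a _ u hu] at hwt; omega

lemma lset_bdd (htopo : ∀ u v, adj u v → u < v) (s i : Fin N) :
    BddAbove {k : ℕ | ∃ l : List (Fin N),
      l.Chain' adj ∧ l.head? = some s ∧ l.getLast? = some i ∧ l.length = k + 1} := by
  refine ⟨N, fun k hk => ?_⟩
  obtain ⟨l, hch, -, -, hlen⟩ := hk
  have p : l.Pairwise (· < ·) := List.isChain_iff_pairwise.mp (hch.imp htopo)
  have n : l.Nodup := p.imp ne_of_lt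
  have := n.length_le_card
  simp only [Fintype.card_fin] at this
  omega

lemma longestLen_step (htopo : ∀ u v, adj u v → u < v) {s i₁ i : Fin N} (hadj : adj i₁ i)
    (hne : {k : ℕ | ∃ l : List (Fin N),
      l.Chain' adj ∧ l.head? = some s ∧ l.getLast? = some i₁ ∧ l.length = k + 1}.Nonempty) :
    longestLen adj s i₁ + 1 ≤ longestLen adj s i := by
  have hmem := Nat.sSup_mem hne (lset_bdd adj htopo s i₁)
  obtain ⟨l, hch, hhd, hlast, hlen⟩ := hmem
  have hlne : l ≠ [] := by rintro rfl; simp at hlen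
  refine le_csSup (lset_bdd adj htopo s i) ⟨l ++ [i], ?_, ?_, List.getLast?_concat (l := l), ?_⟩
  · refine List.isChain_append.mpr ⟨hch, List.isChain_singleton i, ?_⟩
    intro x hx y hy
    rw [Option.mem_def, hlast, Option.some.injEq] at hx
    simp only [List.head?_cons, Option.mem_def, Option.some.injEq] at hy
    rw [← hx, ← hy]; exact hadj
  · rw [List.head?_append_of_ne_nil _ hlne]; exact hhd
  · simp only [List.length_append, List.length_singleton, hlen, longestLen]

end Helpers

/-- If the approximate path counts are computed by the floating-point recurrence,
with every vertex other than the source of in-degree 1 or 2, then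
`(1-δ)^(ℓ(i))·s(i,c) ≤ s̃(i,c) ≤ s(i,c)`, where `ℓ(i)` is the length of the
longest directed path from `s` to `vᵢ`. -/

theorem stmt_15 (N : ℕ) (hN : 0 < N) (δ : ℝ) (hδ0 : 0 ≤ δ) (hδ1 : δ < 1)
    (adj : Fin N → Fin N → Prop) (w : Fin N → Fin N → ℤ)
    (hw : ∀ u v, 0 ≤ w u v) (htopo : ∀ u v, adj u v → u < v)
    (oplus : ℝ → ℝ → ℝ)
    (hop : ∀ a b : ℝ, 0 ≤ a → 0 ≤ b → (1 - δ) * (a + b) ≤ oplus a b ∧ oplus a b ≤ a + b)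
    (st : Fin N → ℤ → ℝ)
    (hbase : ∀ c : ℤ, 0 ≤ c → st ⟨0, hN⟩ c = 1)
    (hneg : ∀ i : Fin N, ∀ c : ℤ, c < 0 → st i c = 0)
    (hrec : ∀ i : Fin N, i ≠ ⟨0, hN⟩ →
      (∃ i₁ : Fin N, (∀ u, adj u i ↔ u = i₁) ∧
        ∀ c : ℤ, 0 ≤ c → st i c = st i₁ (c - w i₁ i)) ∨
      (∃ i₁ i₂ : Fin N, i₁ ≠ i₂ ∧ (∀ u, adj u i ↔ (u = i₁ ∨ u = i₂)) ∧
        ∀ c : ℤ, 0 ≤ c → st i c = oplus (st i₁ (c - w i₁ i)) (st i₂ (c - w i₂ i)))) :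
    ∀ i : Fin N, ∀ c : ℤ,
      (1 - δ) ^ (longestLen adj ⟨0, hN⟩ i) * (pathCount adj w ⟨0, hN⟩ i c : ℝ) ≤ st i c ∧
        st i c ≤ (pathCount adj w ⟨0, hN⟩ i c : ℝ) := by
  have hδ : (0:ℝ) ≤ 1 - δ := by linarith
  have hδ1' : (1:ℝ) - δ ≤ 1 := by linarith
  set s0 : Fin N := ⟨0, hN⟩ with hs0
  have pc : ∀ i c, pathCount adj w s0 i c = (pset adj w s0 i c).ncard := fun i c =>
    Nat.card_coe_set_eq (pset adj w s0 i c)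
  -- the key per-predecessor inequality
  have key : ∀ (j i : Fin N), adj j i → ∀ (cj : ℤ) (x : ℝ),
      (1 - δ) ^ (longestLen adj s0 j) * ((pset adj w s0 j cj).ncard : ℝ) ≤ x → 0 ≤ x →
      (1 - δ) ^ (longestLen adj s0 i) * ((pset adj w s0 j cj).ncard : ℝ) ≤ (1 - δ) * x := by
    intro j i hadj cj x hx hx0
    by_cases hz : (pset adj w s0 j cj).ncard = 0
    · rw [hz]
      simp only [Nat.cast_zero, mul_zero]
      exact mul_nonneg hδ hx0
    · obtain ⟨l, hl⟩ := Set.nonempty_of_ncard_ne_zero hz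
      have hlne : l ≠ [] := by rintro rfl; simp [pset] at hl
      have hne : {k : ℕ | ∃ l : List (Fin N),
          l.Chain' adj ∧ l.head? = some s0 ∧ l.getLast? = some j ∧ l.length = k + 1}.Nonempty := by
        refine ⟨l.length - 1, l, hl.1, hl.2.1, hl.2.2.1, ?_⟩
        have := List.length_pos_iff.mpr hlne
        omega
      have hstep : longestLen adj s0 j + 1 ≤ longestLen adj s0 i :=
        longestLen_step adj htopo hadj hne
      have hpow : (1 - δ) ^ (longestLen adj s0 i) ≤ (1 - δ) ^ (longestLen adj s0 j + 1) :=
        pow_le_pow_of_le_one hδ hδ1' hstep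
      calc (1 - δ) ^ (longestLen adj s0 i) * ((pset adj w s0 j cj).ncard : ℝ)
          ≤ (1 - δ) ^ (longestLen adj s0 j + 1) * ((pset adj w s0 j cj).ncard : ℝ) :=
            mul_le_mul_of_nonneg_right hpow (Nat.cast_nonneg _)
        _ = (1 - δ) * ((1 - δ) ^ (longestLen adj s0 j) * ((pset adj w s0 j cj).ncard : ℝ)) := by
            ring
        _ ≤ (1 - δ) * x := mul_le_mul_of_nonneg_left hx hδ
  -- base vertex
  have hbasecase : ∀ c : ℤ,
      (1 - δ) ^ (longestLen adj s0 s0) * ((pset adj w s0 s0 c).ncard : ℝ) ≤ st s0 c ∧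
        st s0 c ≤ ((pset adj w s0 s0 c).ncard : ℝ) := by
    intro c
    rcases lt_or_ge c 0 with hc | hc
    · rw [hneg s0 c hc, pset_neg adj w hw hc]
      simp
    · rw [hbase c hc, pset_self adj w htopo hc, Set.ncard_singleton]
      refine ⟨?_, by norm_num⟩
      simp only [Nat.cast_one, mul_one]
      exact pow_le_one₀ hδ hδ1'
  suffices H : ∀ n : ℕ, ∀ i : Fin N, i.val ≤ n → ∀ c : ℤ,
      (1 - δ) ^ (longestLen adj s0 i) * ((pset adj w s0 i c).ncard : ℝ) ≤ st i c ∧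
        st i c ≤ ((pset adj w s0 i c).ncard : ℝ) by
    intro i c
    rw [pc]
    exact H N i (le_of_lt i.isLt) c
  intro n
  induction n with
  | zero =>
    intro i hi c
    have : i = s0 := Fin.ext (Nat.le_zero.mp hi)
    rw [this]; exact hbasecase c
  | succ n IH =>
    intro i hi c
    by_cases his : i = s0
    · rw [his]; exact hbasecase c
    · rcases lt_or_ge c 0 with hc | hc
      · rw [hneg i c hc, pset_neg adj w hw hc]
        simp
      · have hsi : s0 ≠ i := fun h => his h.symm
        rcases hrec i his with ⟨i₁, hiff, hr⟩ | ⟨i₁, i₂, h12, hiff, hr⟩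
        · -- in-degree 1
          have hadj1 : adj i₁ i := (hiff i₁).mpr rfl
          have hi₁ : i₁.val ≤ n := by
            have := htopo _ _ hadj1
            omega
          obtain ⟨ih1l, ih1u⟩ := IH i₁ hi₁ (c - w i₁ i)
          have himg : pset adj w s0 i c = (fun l => l ++ [i]) '' pset adj w s0 i₁ (c - w i₁ i) := by
            ext l
            constructor
            · intro hl
              obtain ⟨u, l', hadj, hu, rfl, hl'⟩ := pset_decomp adj w htopo hsi hl
              obtain rfl := (hiff u).mp hadj
              exact ⟨l', hl', rfl⟩
            · rintro ⟨l', hl', rfl⟩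
              exact concat_mem_pset adj w hadj1 hl'
          have hcnt : (pset adj w s0 i c).ncard = (pset adj w s0 i₁ (c - w i₁ i)).ncard := by
            rw [himg]
            exact Set.ncard_image_of_injective _ (fun a b h => List.append_cancel_right h)
          have hst : st i c = st i₁ (c - w i₁ i) := hr c hc
          have hx0 : 0 ≤ st i₁ (c - w i₁ i) :=
            le_trans (mul_nonneg (pow_nonneg hδ _) (Nat.cast_nonneg _)) ih1l
          constructor
          · rw [hcnt, hst]
            have := key i₁ i hadj1 (c - w i₁ i) _ ih1l hx0
            nlinarith [mul_nonneg hδ hx0]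
          · rw [hcnt, hst]; exact ih1u
        · -- in-degree 2
          have hadj1 : adj i₁ i := (hiff i₁).mpr (Or.inl rfl)
          have hadj2 : adj i₂ i := (hiff i₂).mpr (Or.inr rfl)
          have hi₁ : i₁.val ≤ n := by have := htopo _ _ hadj1; omega
          have hi₂ : i₂.val ≤ n := by have := htopo _ _ hadj2; omega
          obtain ⟨ih1l, ih1u⟩ := IH i₁ hi₁ (c - w i₁ i)
          obtain ⟨ih2l, ih2u⟩ := IH i₂ hi₂ (c - w i₂ i)
          have himg : pset adj w s0 i c =
              ((fun l => l ++ [i]) '' pset adj w s0 i₁ (c - w i₁ i)) ∪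
              ((fun l => l ++ [i]) '' pset adj w s0 i₂ (c - w i₂ i)) := by
            ext l
            constructor
            · intro hl
              obtain ⟨u, l', hadj, hu, rfl, hl'⟩ := pset_decomp adj w htopo hsi hl
              rcases (hiff u).mp hadj with rfl | rfl
              · exact Or.inl ⟨l', hl', rfl⟩
              · exact Or.inr ⟨l', hl', rfl⟩
            · rintro (⟨l', hl', rfl⟩ | ⟨l', hl', rfl⟩)
              · exact concat_mem_pset adj w hadj1 hl'
              · exact concat_mem_pset adj w hadj2 hl'
          have hdisj : Disjoint ((fun l => l ++ [i]) '' pset adj w s0 i₁ (c - w i₁ i))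
              ((fun l => l ++ [i]) '' pset adj w s0 i₂ (c - w i₂ i)) := by
            rw [Set.disjoint_left]
            rintro l ⟨l₁, hl₁, rfl⟩ ⟨l₂, hl₂, heq⟩
            obtain rfl : l₂ = l₁ := List.append_cancel_right heq
            exact h12 (Option.some_injective _ (hl₁.2.2.1.symm.trans hl₂.2.2.1))
          have hcnt : (pset adj w s0 i c).ncard =
              (pset adj w s0 i₁ (c - w i₁ i)).ncard + (pset adj w s0 i₂ (c - w i₂ i)).ncard := by
            rw [himg, Set.ncard_union_eq hdisj
              ((pset_finite adj w htopo s0 i₁ _).image _) ((pset_finite adj w htopo s0 i₂ _).image _),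
              Set.ncard_image_of_injective _ (fun a b h => List.append_cancel_right h),
              Set.ncard_image_of_injective _ (fun a b h => List.append_cancel_right h)]
          have hx0 : 0 ≤ st i₁ (c - w i₁ i) :=
            le_trans (mul_nonneg (pow_nonneg hδ _) (Nat.cast_nonneg _)) ih1l
          have hy0 : 0 ≤ st i₂ (c - w i₂ i) :=
            le_trans (mul_nonneg (pow_nonneg hδ _) (Nat.cast_nonneg _)) ih2l
          obtain ⟨hopl, hopu⟩ := hop _ _ hx0 hy0
          have hst : st i c = oplus (st i₁ (c - w i₁ i)) (st i₂ (c - w i₂ i)) := hr c hc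
          have k1 := key i₁ i hadj1 (c - w i₁ i) _ ih1l hx0
          have k2 := key i₂ i hadj2 (c - w i₂ i) _ ih2l hy0
          constructor
          · rw [hcnt, hst]
            push_cast
            nlinarith
          · rw [hcnt, hst]
            push_cast
            linarith
end
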